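/- In the polynomial ring ℤ[x,c], for every integer N ≥ 0 the element M_N := (−1)^N (N!)² c^N x lies in the subring generated by {D_0, D_1, …, D_N}, where D_k := x·Π_{j=1}^k (x² − j²·c); that is, M_N can be written as a polynomial with integer coefficients in D_0, …, D_N. -/

import Mathlib

/-!
Expand `D_n = x·∏_{j=1}^n (x² − j²c)` according to the largest `j = v + 1` at which `x²` is
taken from the factor `x² − j²c`: the factors below it rebuild `D_v / x`, those above it give
`∏_{j=v+2}^n (−j²c) = (−1)^l ((v+2)⋯n)² c^l` with `l = n − 1 − v`, and `(v+2)⋯n = l!·C(n,l)`.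
Hence `D_n = M_n + Σ_{v<n} C(n,l)² · x · D_v · M_l`, where only `x = D_0`, `D_v` and `M_l` with
`v, l < n` occur in the sum, and strong induction on `n` finishes.
-/

open MvPolynomial

/-- `M_k := (−1)^k (k!)² c^k x` in `ℤ[x,c]`, where `x = X 0` and `c = X 1`. -/
noncomputable def Mop (k : ℕ) : MvPolynomial (Fin 2) ℤ :=
  C ((-1 : ℤ) ^ k * (k.factorial : ℤ) ^ 2) * (X 1) ^ k * X 0

/-- `D_N := x·Π_{j=1}^N (x² − j²·c)` in `ℤ[x,c]`, where `x = X 0` and `c = X 1`. -/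
noncomputable def Dop (N : ℕ) : MvPolynomial (Fin 2) ℤ :=
  X 0 * ∏ j ∈ Finset.range N, ((X 0) ^ 2 - C (((j : ℤ) + 1) ^ 2) * X 1)

open Finset
open scoped Nat

lemma prod_Ico_add_one_eq_factorial_mul_choose {v n : ℕ} (hv : v < n) :
    ∏ j ∈ Ico (v + 1) n, (j + 1) = (n - 1 - v)! * n.choose (n - 1 - v) := by
  obtain ⟨l, rfl⟩ := Nat.exists_eq_add_of_lt hv
  rw [show v + l + 1 - 1 - v = l by omega, show v + l + 1 = v + 1 + l by omega,
    ← Nat.ascFactorial_eq_factorial_mul_choose, Nat.ascFactorial_eq_prod_range,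
    prod_Ico_eq_prod_range, Nat.add_sub_cancel_left]
  exact prod_congr rfl fun i _ => by omega

lemma prod_neg_C_mul_X_one (s : Finset ℕ) :
    ∏ j ∈ s, (-C (((j : ℤ) + 1) ^ 2) * X 1 : MvPolynomial (Fin 2) ℤ) =
      C ((-1) ^ #s * ((∏ j ∈ s, (j + 1) : ℕ) : ℤ) ^ 2) * X 1 ^ #s := by
  rw [prod_mul_distrib, prod_const, prod_neg, ← map_prod]
  push_cast
  simp [prod_pow]

lemma Dop_zero : Dop 0 = X 0 := by simp [Dop]

lemma Dop_eq_mul_prod (n : ℕ) :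
    Dop n = X 0 * ∏ j ∈ range n, (-C (((j : ℤ) + 1) ^ 2) * X 1 + X 0 ^ 2) := by
  simp only [Dop, neg_mul, neg_add_eq_sub]

lemma Mop_eq_mul_prod (n : ℕ) :
    Mop n = X 0 * ∏ j ∈ range n, (-C (((j : ℤ) + 1) ^ 2) * X 1 : MvPolynomial (Fin 2) ℤ) := by
  rw [prod_neg_C_mul_X_one, card_range, prod_range_add_one_eq_factorial, Mop, mul_comm]

lemma Dop_eq_Mop_add_sum (n : ℕ) :
    Dop n = Mop n + ∑ v ∈ range n,
      C ((n.choose (n - 1 - v) : ℤ) ^ 2) * X 0 * Dop v * Mop (n - 1 - v) := by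
  rw [Dop_eq_mul_prod, prod_add_ordered, mul_add, ← Mop_eq_mul_prod, mul_sum]
  congr 1
  refine sum_congr rfl fun v hv => ?_
  have hv : v < n := mem_range.1 hv
  have hlow : {j ∈ range n | j < v} = range v := by
    ext j; simp only [mem_filter, mem_range]; omega
  have hhigh : {j ∈ range n | v < j} = Ico (v + 1) n := by
    ext j; simp only [mem_filter, mem_range, mem_Ico]; omega
  rw [hlow, hhigh, prod_neg_C_mul_X_one, prod_Ico_add_one_eq_factorial_mul_choose hv,
    Nat.card_Ico, Dop_eq_mul_prod, Mop, show n - (v + 1) = n - 1 - v by omega]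
  push_cast
  simp only [map_mul, map_pow]
  ring

theorem Mop_mem_adjoin_Dop (n : ℕ) : Mop n ∈ Algebra.adjoin ℤ (Dop '' Set.Iic n) := by
  induction n using Nat.strong_induction_on with
  | _ n ih =>
  have hD : ∀ k ≤ n, Dop k ∈ Algebra.adjoin ℤ (Dop '' Set.Iic n) :=
    fun k hk => Algebra.subset_adjoin ⟨k, hk, rfl⟩
  have hM : ∀ k < n, Mop k ∈ Algebra.adjoin ℤ (Dop '' Set.Iic n) := fun k hk =>
    Algebra.adjoin_mono (Set.image_mono (Set.Iic_subset_Iic.2 hk.le)) (ih k hk)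
  rw [eq_sub_of_add_eq (Dop_eq_Mop_add_sum n).symm]
  refine sub_mem (hD n le_rfl) (sum_mem fun v hv => ?_)
  have hv : v < n := mem_range.1 hv
  refine mul_mem (mul_mem (mul_mem ?_ ?_) (hD v hv.le)) (hM _ (by omega))
  · exact Subalgebra.algebraMap_mem _ _
  · exact Dop_zero ▸ hD 0 n.zero_le

/-- `M_N` is a polynomial with integer coefficients in `D_0, …, D_N`. -/
theorem stmt15 (N : ℕ) :
    ∃ P : MvPolynomial (Fin (N + 1)) ℤ,
      MvPolynomial.aeval (fun k : Fin (N + 1) => Dop (k : ℕ)) P = Mop N := by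
  have h := Mop_mem_adjoin_Dop N
  rwa [← Set.Iio_add_one_eq_Iic, ← Fin.range_val, ← Set.range_comp,
    Algebra.adjoin_range_eq_range_aeval] at h
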